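/- For a positive-integer-valued random variable X with all moments finite and z ∈ (0,1), the error of the K-term moment-series approximation satisfies |G_X'(z) - Ĝ'^K_X(z)| ≤ (1/z) · |ln z|^K E[X^{K+1}] / K!. -/

import Mathlib

open Real Set Finset

lemma iterWithin_negExp (y : ℝ) (hy : 0 < y) (n : ℕ) :
    ∀ x ∈ Set.Icc (0:ℝ) y,
      iteratedDerivWithin n (fun t => Real.exp (-1 * t)) (Set.Icc 0 y) x
        = (-1)^n * Real.exp (-1 * x) := by
  induction n with
  | zero => intro x hx; simp [iteratedDerivWithin_zero]
  | succ n ih =>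
    intro x hx
    have hud : UniqueDiffOn ℝ (Set.Icc (0:ℝ) y) := uniqueDiffOn_Icc hy
    rw [iteratedDerivWithin_succ]
    have hcongr : Set.EqOn (iteratedDerivWithin n (fun t => Real.exp (-1 * t)) (Set.Icc 0 y))
        (fun t => (-1)^n * Real.exp (-1 * t)) (Set.Icc 0 y) := fun t ht => ih t ht
    rw [derivWithin_congr hcongr (ih x hx)]
    have hd : HasDerivAt (fun t => (-1:ℝ)^n * Real.exp (-1 * t))
        ((-1)^n * (Real.exp (-1 * x) * (-1))) x := by
      have : HasDerivAt (fun t => Real.exp (-1 * t)) (Real.exp (-1 * x) * (-1)) x := by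
        have h1 : HasDerivAt (fun t : ℝ => -1 * t) (-1) x := by
          simpa using (hasDerivAt_id x).const_mul (-1:ℝ)
        exact (Real.hasDerivAt_exp (-1 * x)).comp x h1
      exact this.const_mul _
    rw [hd.hasDerivWithinAt.derivWithin (hud x hx)]
    ring

lemma exp_taylor_bound (x : ℝ) (hx : x ≤ 0) (K : ℕ) :
    |Real.exp x - ∑ n ∈ Finset.range K, x^n / n.factorial| ≤ |x|^K / K.factorial := by
  rcases K with _ | N
  · simp only [Finset.range_zero, Finset.sum_empty, sub_zero, pow_zero, Nat.factorial_zero]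
    rw [abs_of_pos (Real.exp_pos x)]
    simpa using Real.exp_le_one_iff.mpr hx
  rcases eq_or_lt_of_le hx with h0 | hneg
  · subst h0
    have : ∑ n ∈ Finset.range (N+1), (0:ℝ)^n / n.factorial = 1 := by
      rw [Finset.sum_eq_single 0]
      · simp
      · intro b _ hb; simp [zero_pow hb]
      · simp
    simp only [this, Real.exp_zero, sub_self, abs_zero]
    positivity
  · set y := -x with hy
    have hy0 : 0 < y := by simp [hy]; linarith
    have hf : ContDiff ℝ (⊤ : ℕ∞) (fun t : ℝ => Real.exp (-1 * t)) :=
      Real.contDiff_exp.comp ((contDiff_const).mul contDiff_id)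
    have hfc : ContDiffOn ℝ N (fun t : ℝ => Real.exp (-1 * t)) (Set.Icc 0 y) :=
      (hf.of_le (mod_cast le_top)).contDiffOn
    have hf' : DifferentiableOn ℝ
        (iteratedDerivWithin N (fun t : ℝ => Real.exp (-1 * t)) (Set.Icc 0 y)) (Set.Ioo 0 y) := by
      have hdd : DifferentiableOn ℝ (fun t : ℝ => (-1:ℝ)^N * Real.exp (-1 * t)) (Set.Ioo 0 y) := by
        apply Differentiable.differentiableOn
        exact (Real.differentiable_exp.comp ((differentiable_const _).mul differentiable_id)).const_mul _
      exact hdd.congr (fun t ht => iterWithin_negExp y hy0 N t (Set.Ioo_subset_Icc_self ht))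
    obtain ⟨x', hx', heq⟩ := taylor_mean_remainder_lagrange (f := fun t : ℝ => Real.exp (-1 * t))
      (x₀ := 0) (x := y) (n := N) hy0.ne (by rw [Set.uIcc_of_le hy0.le]; exact hfc)
      (by rw [Set.uIcc_of_le hy0.le, Set.uIoo_of_le hy0.le]; exact hf')
    rw [Set.uIoo_of_le hy0.le] at hx'
    rw [Set.uIcc_of_le hy0.le] at heq
    have hT : taylorWithinEval (fun t : ℝ => Real.exp (-1 * t)) N (Set.Icc 0 y) 0 y
        = ∑ n ∈ Finset.range (N+1), x^n / n.factorial := by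
      rw [taylor_within_apply]
      refine Finset.sum_congr rfl fun k _ => ?_
      rw [iterWithin_negExp y hy0 k 0 (Set.mem_Icc.mpr ⟨le_refl _, le_of_lt hy0⟩)]
      have hxk : x ^ k = (-1:ℝ)^k * y^k := by
        rw [hy]; rw [← neg_pow]; ring_nf
      rw [smul_eq_mul, hxk]
      field_simp
      simp
    have hfy : Real.exp (-1 * y) = Real.exp x := by rw [hy]; ring_nf
    have hIcc : x' ∈ Set.Icc (0:ℝ) y := Set.Ioo_subset_Icc_self hx'
    rw [iterWithin_negExp y hy0 (N+1) x' hIcc] at heq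
    simp only [hfy, sub_zero] at heq
    rw [hT] at heq
    rw [heq]
    have hexp1 : Real.exp (-1 * x') ≤ 1 := by
      apply Real.exp_le_one_iff.mpr; nlinarith [hx'.1]
    have habs : |x| = y := by rw [hy, abs_of_neg hneg]
    rw [habs]
    have : |(-1:ℝ) ^ (N + 1) * Real.exp (-1 * x') * y ^ (N + 1) / ((N + 1).factorial : ℝ)|
        = Real.exp (-1 * x') * y ^ (N + 1) / ((N + 1).factorial : ℝ) := by
      rw [abs_div, abs_mul, abs_mul, abs_pow, abs_neg, abs_one, one_pow, one_mul,
        abs_of_pos (Real.exp_pos _), abs_pow, abs_of_pos hy0, Nat.abs_cast]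
    rw [this]
    have hden : (0:ℝ) < ((N+1).factorial : ℝ) := by positivity
    have h2 : Real.exp (-1*x') * y^(N+1) ≤ y^(N+1) := by
      nlinarith [pow_nonneg hy0.le (N+1), Real.exp_pos (-1*x')]
    exact (div_le_div_iff_of_pos_right hden).mpr h2

/-- For X on {1,2,...} with all moments finite and z ∈ (0,1), the error of
the K-term moment-series approximation of G_X'(z) satisfies
|G_X'(z) - Ĝ'^K_X(z)| ≤ (1/z)·|ln z|^K E[X^{K+1}]/K!. -/
theorem moment_series_error_bound
    (p : ℕ → ℝ) (hp : ∀ m, 0 ≤ p m) (hp0 : p 0 = 0) (hp1 : HasSum p 1)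
    (M : ℕ → ℝ) (hM : ∀ n : ℕ, 1 ≤ n → HasSum (fun m : ℕ => (m : ℝ) ^ n * p m) (M n))
    (z : ℝ) (hz : z ∈ Set.Ioo (0 : ℝ) 1)
    (G' : ℝ) (hG' : HasSum (fun m : ℕ => (m : ℝ) * p m * z ^ (m - 1)) G')
    (K : ℕ) :
    |G' - (1 / z) * ∑ n ∈ Finset.range K, (Real.log z) ^ n * M (n + 1) / n.factorial|
      ≤ (1 / z) * |Real.log z| ^ K * M (K + 1) / K.factorial := by
  obtain ⟨hz0, hz1⟩ := hz
  set L := Real.log z with hL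
  have hLneg : L < 0 := Real.log_neg hz0 hz1
  have hzexp : ∀ m : ℕ, z ^ m = Real.exp ((m : ℝ) * L) := by
    intro m
    rw [Real.exp_nat_mul, Real.exp_log hz0]
  -- the series for z * G'
  have hf : HasSum (fun m : ℕ => (m : ℝ) * p m * z ^ m) (z * G') := by
    have he : (fun m : ℕ => (m : ℝ) * p m * z ^ m)
        = fun m : ℕ => z * ((m : ℝ) * p m * z ^ (m - 1)) := by
      funext m
      cases m with
      | zero => simp
      | succ m => simp only [Nat.add_sub_cancel]; rw [pow_succ]; ring
    rw [he]
    exact hG'.mul_left z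
  -- the series for the truncated sum
  set S' := ∑ n ∈ Finset.range K, L ^ n / n.factorial * M (n + 1) with hS'
  have hg : HasSum
      (fun m : ℕ => ∑ n ∈ Finset.range K, L ^ n / n.factorial * ((m : ℝ) ^ (n + 1) * p m)) S' := by
    exact hasSum_sum fun n _ => (hM (n + 1) (by omega)).mul_left _
  have hsub : HasSum
      (fun m : ℕ => (m : ℝ) * p m * z ^ m
        - ∑ n ∈ Finset.range K, L ^ n / n.factorial * ((m : ℝ) ^ (n + 1) * p m))
      (z * G' - S') := hf.sub hg
  -- the bounding series
  have hb : HasSum (fun m : ℕ => |L| ^ K / K.factorial * ((m : ℝ) ^ (K + 1) * p m))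
      (|L| ^ K / K.factorial * M (K + 1)) := (hM (K + 1) (by omega)).mul_left _
  -- pointwise bound
  have habs : ∀ m : ℕ,
      |(m : ℝ) * p m * z ^ m
        - ∑ n ∈ Finset.range K, L ^ n / n.factorial * ((m : ℝ) ^ (n + 1) * p m)|
      ≤ |L| ^ K / K.factorial * ((m : ℝ) ^ (K + 1) * p m) := by
    intro m
    have hrw : (m : ℝ) * p m * z ^ m
        - ∑ n ∈ Finset.range K, L ^ n / n.factorial * ((m : ℝ) ^ (n + 1) * p m)
        = (m : ℝ) * p m * (Real.exp ((m : ℝ) * L)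
            - ∑ n ∈ Finset.range K, ((m : ℝ) * L) ^ n / n.factorial) := by
      rw [hzexp m, mul_sub, Finset.mul_sum]
      congr 1
      refine Finset.sum_congr rfl fun n _ => ?_
      rw [mul_pow, pow_succ]
      ring
    rw [hrw, abs_mul]
    have hmL : (m : ℝ) * L ≤ 0 := mul_nonpos_of_nonneg_of_nonpos (Nat.cast_nonneg m) hLneg.le
    have h1 : |(m : ℝ) * p m| = (m : ℝ) * p m :=
      abs_of_nonneg (mul_nonneg (Nat.cast_nonneg m) (hp m))
    rw [h1]
    have h2 := exp_taylor_bound ((m : ℝ) * L) hmL K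
    have h3 : |(m : ℝ) * L| ^ K = (m : ℝ) ^ K * |L| ^ K := by
      rw [abs_mul, Nat.abs_cast, mul_pow]
    calc (m : ℝ) * p m * |Real.exp ((m : ℝ) * L)
            - ∑ n ∈ Finset.range K, ((m : ℝ) * L) ^ n / n.factorial|
        ≤ (m : ℝ) * p m * (|(m : ℝ) * L| ^ K / K.factorial) := by
          apply mul_le_mul_of_nonneg_left h2 (mul_nonneg (Nat.cast_nonneg m) (hp m))
      _ = |L| ^ K / K.factorial * ((m : ℝ) ^ (K + 1) * p m) := by
          rw [h3, pow_succ]; ring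
  -- conclude the bound on |z G' - S'|
  have hmain : |z * G' - S'| ≤ |L| ^ K / K.factorial * M (K + 1) := by
    rw [abs_le]
    constructor
    · refine hasSum_le (fun m => ?_) hb.neg hsub
      have := habs m
      have := neg_abs_le ((m : ℝ) * p m * z ^ m
        - ∑ n ∈ Finset.range K, L ^ n / n.factorial * ((m : ℝ) ^ (n + 1) * p m))
      linarith
    · refine hasSum_le (fun m => ?_) hsub hb
      exact (le_abs_self _).trans (habs m)
  -- rewrite the goal
  have hSsum : ∑ n ∈ Finset.range K, L ^ n * M (n + 1) / n.factorial = S' := by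
    rw [hS']
    exact Finset.sum_congr rfl fun n _ => by ring
  rw [hSsum]
  have hz0' : z ≠ 0 := ne_of_gt hz0
  have hkey : G' - 1 / z * S' = 1 / z * (z * G' - S') := by
    field_simp
  rw [hkey, abs_mul, abs_of_pos (by positivity : (0:ℝ) < 1 / z)]
  calc 1 / z * |z * G' - S'| ≤ 1 / z * (|L| ^ K / K.factorial * M (K + 1)) :=
        mul_le_mul_of_nonneg_left hmain (by positivity)
    _ = 1 / z * |L| ^ K * M (K + 1) / K.factorial := by ring
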